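/- arXiv:2605.18103 — 5 statements merged into one kernel-verified Lean document; each statement's English description precedes it below -/
import Mathlib

section
/- Let X be a normed vector space with a closed generating cone X₊ (i.e., X = X₊ − X₊). A linear map f : X → X satisfies f[X₊] ⊆ X₊ ∪ (−X₊) if and only if either (i) f is positive or −f is positive (i.e., f[X₊] ⊆ X₊ or f[X₊] ⊆ −X₊), or (ii) there exist u ∈ X₊ ∪ (−X₊) and a linear functional ψ on X such that f(x) = ψ(x)·u for all x ∈ X. -/
/-!
If `f` is neither positive nor negative, it sends some `b ∈ X₊` to `X₊ \ {0}` and some `a ∈ X₊`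
to `-X₊ \ {0}`. The set `f[X₊]` is convex and lies in `X₊ ∪ -X₊`, so every segment in it joining a
point of `X₊` to a point of `-X₊` is a connected set covered by these two closed sets; it must
therefore meet `X₊ ∩ -X₊ = {0}`, which makes its endpoints proportional. Comparing each `f x`
with `f a` or `f b` puts all of `f[X₊]` on the line `ℝ f b`, and since `X₊` generates `X`, `f` has
rank one.
-/

/-- A (pointed) cone in a real vector space. -/
def IsCone {X : Type*} [AddCommGroup X] [Module ℝ X] (K : Set X) : Prop :=
  0 ∈ K ∧ (∀ x ∈ K, ∀ y ∈ K, x + y ∈ K) ∧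
    (∀ (c : ℝ), 0 ≤ c → ∀ x ∈ K, c • x ∈ K) ∧ K ∩ (-K) ⊆ {0}

section Cone

variable {X : Type*} [AddCommGroup X] [Module ℝ X] {K : Set X}

theorem IsCone.convex (hK : IsCone K) : Convex ℝ K := by
  obtain ⟨-, hadd, hsmul, -⟩ := hK
  intro x hx y hy a b ha hb _
  exact hadd _ (hsmul a ha x hx) _ (hsmul b hb y hy)

theorem IsCone.smul_mem_union_neg (hK : IsCone K) {u : X} (hu : u ∈ K ∪ -K) (r : ℝ) :
    r • u ∈ K ∪ -K := by
  obtain ⟨-, -, hsmul, -⟩ := hK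
  rcases le_total 0 r with hr | hr <;> rcases hu with hu | hu
  · exact Or.inl (hsmul r hr u hu)
  · exact Or.inr (by simpa [Set.mem_neg, smul_neg] using hsmul r hr _ hu)
  · exact Or.inr (by simpa [Set.mem_neg, neg_smul] using hsmul (-r) (neg_nonneg.2 hr) u hu)
  · exact Or.inl (by simpa using hsmul (-r) (neg_nonneg.2 hr) _ hu)

end Cone

theorem span_singleton_eq_of_zero_mem_segment {𝕜 E : Type*} [Field 𝕜] [LinearOrder 𝕜]
    [IsStrictOrderedRing 𝕜] [AddCommGroup E] [Module 𝕜 E] {u v : E}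
    (h : (0 : E) ∈ segment 𝕜 u v) (hu : u ≠ 0) (hv : v ≠ 0) : 𝕜 ∙ u = 𝕜 ∙ v := by
  rw [mem_segment_iff_sameRay, zero_sub, sub_zero] at h
  obtain ⟨r₁, r₂, hr₁, hr₂, h⟩ := h.exists_pos (neg_ne_zero.2 hu) hv
  refine Submodule.span_singleton_eq_span_singleton.2
    ⟨Units.mk0 (-(r₁ / r₂)) (by simp [hr₁.ne', hr₂.ne']), ?_⟩
  rw [Units.smul_mk0, neg_smul, ← smul_neg, div_eq_inv_mul, mul_smul, h, inv_smul_smul₀ hr₂.ne']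

section Topological

variable {E : Type*} [AddCommGroup E] [Module ℝ E] [TopologicalSpace E]
  [IsTopologicalAddGroup E] [ContinuousSMul ℝ E] {K : Set E}

theorem zero_mem_segment_of_segment_subset_union_neg (hK : IsClosed K) (hpoint : K ∩ -K ⊆ {0})
    {u v : E} (hu : u ∈ K) (hv : v ∈ -K) (hseg : segment ℝ u v ⊆ K ∪ -K) :
    (0 : E) ∈ segment ℝ u v := by
  obtain ⟨z, hz, hzK, hzK'⟩ := isPreconnected_closed_iff.1 (convex_segment u v).isPreconnected
    K (-K) hK hK.neg hseg ⟨u, left_mem_segment ℝ u v, hu⟩ ⟨v, right_mem_segment ℝ u v, hv⟩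
  rwa [← hpoint ⟨hzK, hzK'⟩]

theorem subset_span_singleton_of_convex_subset_union_neg (hK : IsClosed K)
    (hpoint : K ∩ -K ⊆ {0}) {S : Set E} (hS : Convex ℝ S) (hSK : S ⊆ K ∪ -K)
    {u v : E} (hu : u ∈ S) (huK : u ∈ K) (hu0 : u ≠ 0) (hv : v ∈ S) (hvK : v ∈ -K)
    (hv0 : v ≠ 0) : S ⊆ ℝ ∙ u := by
  have span_eq {x y : E} (hx : x ∈ S) (hxK : x ∈ K) (hx0 : x ≠ 0) (hy : y ∈ S) (hyK : y ∈ -K)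
      (hy0 : y ≠ 0) : ℝ ∙ x = ℝ ∙ y :=
    span_singleton_eq_of_zero_mem_segment (zero_mem_segment_of_segment_subset_union_neg hK
      hpoint hxK hyK ((hS.segment_subset hx hy).trans hSK)) hx0 hy0
  intro w hw
  rcases eq_or_ne w 0 with rfl | hw0
  · exact zero_mem _
  have hw_span : w ∈ ℝ ∙ w := Submodule.mem_span_singleton_self w
  rcases hSK hw with hwK | hwK
  · rwa [span_eq hw hwK hw0 hv hvK hv0, ← span_eq hu huK hu0 hv hvK hv0] at hw_span
  · rwa [← span_eq hu huK hu0 hw hwK hw0] at hw_span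

end Topological

theorem LinearMap.exists_eq_smul_of_forall_mem_span_singleton {K M N : Type*} [Field K]
    [AddCommGroup M] [Module K M] [AddCommGroup N] [Module K N] (f : M →ₗ[K] N) {u : N}
    (h : ∀ x, f x ∈ K ∙ u) : ∃ ψ : M →ₗ[K] K, ∀ x, f x = ψ x • u := by
  rcases eq_or_ne u 0 with rfl | hu
  · exact ⟨0, fun x => by simpa using h x⟩
  exact ⟨LinearEquiv.coord K N u hu ∘ₗ f.codRestrict _ h, fun x =>
    (LinearEquiv.coord_apply_smul K N u hu ⟨f x, h x⟩).symm⟩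

theorem stmt2 {X : Type*} [NormedAddCommGroup X] [NormedSpace ℝ X]
    (Xp : Set X) (hK : IsCone Xp) (hclosed : IsClosed Xp)
    (hgen : ∀ x : X, ∃ a ∈ Xp, ∃ b ∈ Xp, x = a - b)
    (f : X →ₗ[ℝ] X) :
    (∀ x ∈ Xp, f x ∈ Xp ∪ (-Xp)) ↔
      ((∀ x ∈ Xp, f x ∈ Xp) ∨ (∀ x ∈ Xp, f x ∈ -Xp)) ∨
        (∃ u ∈ Xp ∪ (-Xp), ∃ ψ : X →ₗ[ℝ] ℝ, ∀ x, f x = ψ x • u) := by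
  refine ⟨fun hf => or_iff_not_imp_left.2 fun hsign => ?_, ?_⟩
  · push Not at hsign
    obtain ⟨⟨a, ha, hfa⟩, ⟨b, hb, hfb⟩⟩ := hsign
    have hfb' : f b ∈ Xp := (hf b hb).resolve_right hfb
    have hrange : f '' Xp ⊆ ℝ ∙ f b :=
      subset_span_singleton_of_convex_subset_union_neg hclosed hK.2.2.2
        (hK.convex.linear_image f) (Set.image_subset_iff.2 hf)
        (Set.mem_image_of_mem f hb) hfb' (ne_of_mem_of_not_mem (by simpa using hK.1) hfb).symm
        (Set.mem_image_of_mem f ha) ((hf a ha).resolve_left hfa)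
        (ne_of_mem_of_not_mem hK.1 hfa).symm
    obtain ⟨ψ, hψ⟩ := f.exists_eq_smul_of_forall_mem_span_singleton fun x => by
      obtain ⟨p, hp, q, hq, rfl⟩ := hgen x
      rw [map_sub]
      exact sub_mem (hrange ⟨p, hp, rfl⟩) (hrange ⟨q, hq, rfl⟩)
    exact ⟨f b, Or.inl hfb', ψ, hψ⟩
  · rintro ((hpos | hneg) | ⟨u, hu, ψ, hψ⟩) x hx
    · exact Or.inl (hpos x hx)
    · exact Or.inr (hneg x hx)
    · rw [hψ]
      exact hK.smul_mem_union_neg hu _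
end

section
/- Let X be a partially ordered real vector space with generating cone X₊ and let T : X⁽²⁾ → X⁽²⁾ be a linear map on the second symmetric tensor power. If T maps every positive decomposable element x ⊗ x (x ∈ X₊) to a tensor of rank at most 1, then T maps every decomposable element u ⊗ u (u ∈ X arbitrary) to a tensor of rank at most 1. -/
open TensorProduct

/-- The second symmetric product space `X⁽²⁾`: the symmetric tensors in `X ⊗ X`. -/
noncomputable def sym2Space (X : Type*) [AddCommGroup X] [Module ℝ X] :
    Submodule ℝ (X ⊗[ℝ] X) :=
  LinearMap.eqLocus (TensorProduct.comm ℝ X X).toLinearMap LinearMap.id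

lemma tmul_self_mem_sym2Space {X : Type*} [AddCommGroup X] [Module ℝ X] (x : X) :
    x ⊗ₜ[ℝ] x ∈ sym2Space X := by
  simp [sym2Space, LinearMap.mem_eqLocus]

/-- The decomposable element `x ⊗ x` viewed in `X⁽²⁾`. -/
noncomputable def sq2 {X : Type*} [AddCommGroup X] [Module ℝ X] (x : X) : sym2Space X :=
  ⟨x ⊗ₜ[ℝ] x, tmul_self_mem_sym2Space x⟩

/-!
Fix a Hamel basis of `X`; a symmetric tensor has rank at most one iff all 2 × 2 minors of its
coordinate matrix vanish. Write `u = a - c` with `a, c ∈ X₊`. Since `x ↦ T (x ⊗ x)` is quadratic,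
each minor of `T ((a + α c) ⊗ (a + α c))` is a polynomial in `α`; it vanishes for `α ≥ 0` because
`a + α c ∈ X₊` there, hence identically, and in particular at `α = -1`.
-/

def HasVanishingMinors {ι R : Type*} [Mul R] (f : ι × ι → R) : Prop :=
  ∀ i j k l, f (i, j) * f (k, l) = f (i, l) * f (k, j)

namespace Module.Basis

variable {ι R M : Type*} [CommRing R] [AddCommGroup M] [Module R M]

theorem tensorProduct_repr_comm_apply (b : Basis ι R M) (t : M ⊗[R] M) (i j : ι) :
    (b.tensorProduct b).repr (TensorProduct.comm R M M t) (i, j) =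
      (b.tensorProduct b).repr t (j, i) := by
  induction t with
  | zero => simp
  | tmul x y => simp [mul_comm]
  | add x y hx hy => simp [hx, hy]

theorem hasVanishingMinors_repr_smul_tmul_self (b : Basis ι R M) (l : R) (z : M) :
    HasVanishingMinors ⇑((b.tensorProduct b).repr (l • z ⊗ₜ[R] z)) := by
  intro i j k m
  simp only [map_smul, Finsupp.smul_apply, tensorProduct_repr_tmul_apply, smul_eq_mul]
  ring

theorem exists_eq_smul_tmul_self_of_hasVanishingMinors {K V : Type*} [Field K]
    [AddCommGroup V] [Module K V] (b : Basis ι K V) {t : V ⊗[K] V}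
    (hsymm : TensorProduct.comm K V V t = t)
    (hmin : HasVanishingMinors ⇑((b.tensorProduct b).repr t)) :
    ∃ (z : V) (l : K), t = l • z ⊗ₜ[K] z := by
  set f := (b.tensorProduct b).repr t
  have hf : ∀ i j, f (i, j) = f (j, i) := fun i j => by
    rw [← b.tensorProduct_repr_comm_apply, hsymm]
  by_cases ht : t = 0
  · exact ⟨0, 0, by simp [ht]⟩
  obtain ⟨⟨i₀, j₀⟩, hij⟩ : ∃ p, f p ≠ 0 := by
    by_contra! h
    exact ht ((b.tensorProduct b).repr.map_eq_zero_iff.mp (Finsupp.ext h))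
  -- a nonzero off-diagonal entry forces a nonzero diagonal one: f(i₀,j₀)² = f(i₀,i₀) f(j₀,j₀)
  have hdiag : f (i₀, i₀) ≠ 0 := by
    have h := hmin i₀ j₀ j₀ i₀
    rw [← hf i₀ j₀] at h
    exact left_ne_zero_of_mul (h ▸ mul_ne_zero hij hij)
  refine ⟨b.repr.symm (f.curry i₀), (f (i₀, i₀))⁻¹, ?_⟩
  apply (b.tensorProduct b).repr.injective
  ext ⟨i, j⟩
  simp only [map_smul, Finsupp.smul_apply, tensorProduct_repr_tmul_apply,
    LinearEquiv.apply_symm_apply, Finsupp.curry_apply, smul_eq_mul]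
  rw [eq_inv_mul_iff_mul_eq₀ hdiag]
  exact (hmin i₀ i₀ i j).trans (by rw [hf i i₀])

end Module.Basis

theorem HasVanishingMinors.eval_of_infinite {ι R : Type*} [CommRing R] [IsDomain R]
    {P : ι × ι → Polynomial R} {s : Set R} (hs : s.Infinite)
    (h : ∀ β ∈ s, HasVanishingMinors fun q => (P q).eval β) (α : R) :
    HasVanishingMinors fun q => (P q).eval α := by
  intro i j k l
  have hzero : P (i, j) * P (k, l) - P (i, l) * P (k, j) = 0 := by
    refine Polynomial.eq_zero_of_infinite_isRoot _ (hs.mono fun β hβ => ?_)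
    simpa [sub_eq_zero] using h β hβ i j k l
  simpa [sub_eq_zero] using congrArg (Polynomial.eval α) hzero

section Sym2

variable {X : Type*} [AddCommGroup X] [Module ℝ X]

lemma comm_coe_sym2Space (s : sym2Space X) :
    TensorProduct.comm ℝ X X (s : X ⊗[ℝ] X) = s :=
  LinearMap.mem_eqLocus.mp s.2

lemma tmul_add_tmul_mem_sym2Space (a c : X) : a ⊗ₜ[ℝ] c + c ⊗ₜ[ℝ] a ∈ sym2Space X := by
  simp [sym2Space, LinearMap.mem_eqLocus, add_comm]

lemma sq2_add_smul (a c : X) (α : ℝ) :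
    sq2 (a + α • c) =
      sq2 a + α • ⟨_, tmul_add_tmul_mem_sym2Space a c⟩ + α ^ 2 • sq2 c := by
  ext
  simp only [sq2, Submodule.coe_add, Submodule.coe_smul, tmul_add, add_tmul, tmul_smul,
    smul_tmul', smul_add, smul_smul, sq]
  abel

lemma exists_polynomial_eval_sq2_add_smul {κ : Type*} (φ : sym2Space X →ₗ[ℝ] κ →₀ ℝ)
    (a c : X) : ∃ P : κ → Polynomial ℝ, ∀ α q, φ (sq2 (a + α • c)) q = (P q).eval α := by
  refine ⟨fun q => Polynomial.C (φ (sq2 a) q)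
    + Polynomial.C (φ ⟨_, tmul_add_tmul_mem_sym2Space a c⟩ q) * Polynomial.X
    + Polynomial.C (φ (sq2 c) q) * Polynomial.X ^ 2, fun α q => ?_⟩
  simp only [sq2_add_smul, map_add, map_smul, Finsupp.add_apply, Finsupp.smul_apply,
    smul_eq_mul, Polynomial.eval_add, Polynomial.eval_mul, Polynomial.eval_C,
    Polynomial.eval_X, Polynomial.eval_pow]
  ring

end Sym2

theorem stmt5 {X : Type*} [AddCommGroup X] [Module ℝ X]
    (Xp : Set X) (hK : IsCone Xp)
    (hgen : ∀ z : X, ∃ a ∈ Xp, ∃ b ∈ Xp, z = a - b)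
    (T : sym2Space X →ₗ[ℝ] sym2Space X)
    (h : ∀ x ∈ Xp, ∃ (z : X) (l : ℝ),
      ((T (sq2 x) : sym2Space X) : X ⊗[ℝ] X) = l • (z ⊗ₜ[ℝ] z)) :
    ∀ u : X, ∃ (z : X) (l : ℝ),
      ((T (sq2 u) : sym2Space X) : X ⊗[ℝ] X) = l • (z ⊗ₜ[ℝ] z) := by
  intro u
  obtain ⟨a, ha, c, hc, rfl⟩ := hgen u
  let b := Module.Basis.ofVectorSpace ℝ X
  let φ := (b.tensorProduct b).repr.toLinearMap ∘ₗ (sym2Space X).subtype ∘ₗ T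
  obtain ⟨P, hP⟩ := exists_polynomial_eval_sq2_add_smul φ a c
  obtain ⟨-, hadd, hsmul, -⟩ := hK
  have hray : ∀ α ∈ Set.Ici (0 : ℝ), a + α • c ∈ Xp :=
    fun α hα => hadd a ha _ (hsmul α hα c hc)
  have hcoeff : ∀ α : ℝ, (fun q => (P q).eval α) =
      ⇑((b.tensorProduct b).repr (T (sq2 (a + α • c)) : X ⊗[ℝ] X)) :=
    fun α => funext fun q => (hP α q).symm
  have hminors : HasVanishingMinors fun q => (P q).eval (-1) := by
    refine HasVanishingMinors.eval_of_infinite (Set.Ici_infinite 0) (fun α hα => ?_) (-1)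
    obtain ⟨z, l, hz⟩ := h _ (hray α hα)
    rw [hcoeff, hz]
    exact b.hasVanishingMinors_repr_smul_tmul_self l z
  have hu : a + (-1 : ℝ) • c = a - c := by rw [neg_one_smul, sub_eq_add_neg]
  refine b.exists_eq_smul_tmul_self_of_hasVanishingMinors (comm_coe_sym2Space _) ?_
  rwa [← hu, ← hcoeff]
end

section
/- Let X be a partially ordered normed vector space with closed generating cone X₊, and let CP(X₊) = {Σᵢ uᵢ⊗uᵢ : uᵢ ∈ X₊, finite sums} ⊆ X⁽²⁾ be the completely positive cone. Then the extremal elements of CP(X₊) are exactly the elements u ⊗ u with u ∈ X₊. -/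
open TensorProduct

/-- `z` is extremal for the set `C` (w.r.t. the order induced by `C`). -/
def IsExtremal {X : Type*} [AddCommGroup X] [Module ℝ X] (C : Set X) (z : X) : Prop :=
  z ∈ C ∧ ∀ w ∈ C, z - w ∈ C → ∃ l : ℝ, l ∈ Set.Icc (0:ℝ) 1 ∧ w = l • z

/-- The completely positive cone `CP(X₊)` inside `X ⊗ X`. -/
def CPcone {X : Type*} [AddCommGroup X] [Module ℝ X] (Xp : Set X) : Set (X ⊗[ℝ] X) :=
  {A | ∃ (n : ℕ) (u : Fin n → X), (∀ i, u i ∈ Xp) ∧ A = ∑ i, u i ⊗ₜ[ℝ] u i}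


noncomputable def tsq {X : Type*} [AddCommGroup X] [Module ℝ X] (f : X →ₗ[ℝ] ℝ) :
    X ⊗[ℝ] X →ₗ[ℝ] ℝ :=
  TensorProduct.lift ((LinearMap.mul ℝ ℝ).compl₁₂ f f)

@[simp] lemma tsq_tmul {X : Type*} [AddCommGroup X] [Module ℝ X] (f : X →ₗ[ℝ] ℝ) (x y : X) :
    tsq f (x ⊗ₜ[ℝ] y) = f x * f y := rfl

lemma mem_span_of_dual {X : Type*} [AddCommGroup X] [Module ℝ X] (u v : X)
    (h : ∀ f : X →ₗ[ℝ] ℝ, f u = 0 → f v = 0) : ∃ c : ℝ, v = c • u := by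
  by_contra hc
  push_neg at hc
  have hv : v ∉ Submodule.span ℝ {u} := by
    simp only [Submodule.mem_span_singleton]
    rintro ⟨c, rfl⟩; exact hc c rfl
  obtain ⟨f, hf0, hf⟩ := (Submodule.span ℝ {u}).exists_dual_map_eq_bot_of_notMem hv inferInstance
  have hu : f u = 0 := by
    have : f u ∈ (Submodule.span ℝ {u}).map f :=
      Submodule.mem_map_of_mem (Submodule.mem_span_singleton_self u)
    rwa [hf, Submodule.mem_bot] at this
  exact hf0 (h f hu)

lemma decomp_aux {X : Type*} [AddCommGroup X] [Module ℝ X] (u : X) {n : ℕ} (w : Fin n → X)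
    (h : u ⊗ₜ[ℝ] u = ∑ i, w i ⊗ₜ[ℝ] w i) : ∀ i, ∃ c : ℝ, w i = c • u := by
  intro i
  apply mem_span_of_dual
  intro f hfu
  have h2 : f u * f u = ∑ j, f (w j) * f (w j) := by
    have := congrArg (tsq f) h
    simpa [map_sum] using this
  rw [hfu, mul_zero] at h2
  have hz : ∀ j ∈ Finset.univ, f (w j) * f (w j) = 0 :=
    (Finset.sum_eq_zero_iff_of_nonneg (fun j _ => mul_self_nonneg (f (w j)))).mp h2.symm
  have := hz i (Finset.mem_univ i)
  exact (mul_self_eq_zero).mp this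

lemma smul_tmul_self {X : Type*} [AddCommGroup X] [Module ℝ X] (c : ℝ) (x : X) :
    (c • x) ⊗ₜ[ℝ] (c • x) = (c * c) • (x ⊗ₜ[ℝ] x) := by
  rw [smul_tmul, tmul_smul, tmul_smul, smul_smul]

lemma CP_add {X : Type*} [AddCommGroup X] [Module ℝ X] {Xp : Set X} {A B : X ⊗[ℝ] X}
    (hA : A ∈ CPcone Xp) (hB : B ∈ CPcone Xp) : A + B ∈ CPcone Xp := by
  obtain ⟨n, u, hu, rfl⟩ := hA
  obtain ⟨m, v, hv, rfl⟩ := hB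
  refine ⟨n + m, Fin.append u v, fun i => ?_, ?_⟩
  · exact Fin.addCases (fun j => by simpa using hu j) (fun j => by simpa using hv j) i
  · rw [Fin.sum_univ_add]
    simp [Fin.append_left, Fin.append_right]

lemma CP_sum {X : Type*} [AddCommGroup X] [Module ℝ X] {Xp : Set X} {n : ℕ} (u : Fin n → X)
    (hu : ∀ i, u i ∈ Xp) (s : Finset (Fin n)) : ∑ i ∈ s, u i ⊗ₜ[ℝ] u i ∈ CPcone Xp := by
  classical
  induction s using Finset.induction with
  | empty => exact ⟨0, fun i => 0, fun i => i.elim0, by simp⟩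
  | @insert a s hx ih =>
    rw [Finset.sum_insert hx]
    exact CP_add ⟨1, fun _ => u a, fun _ => hu a, by simp⟩ ih

theorem stmt7 {X : Type*} [NormedAddCommGroup X] [NormedSpace ℝ X]
    (Xp : Set X) (hK : IsCone Xp) (hclosed : IsClosed Xp)
    (hgen : ∀ z : X, ∃ a ∈ Xp, ∃ b ∈ Xp, z = a - b) :
    ∀ A : X ⊗[ℝ] X, IsExtremal (CPcone Xp) A ↔ ∃ u ∈ Xp, A = u ⊗ₜ[ℝ] u := by
  intro A
  classical
  constructor
  · rintro ⟨⟨n, u, hu, rfl⟩, hext⟩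
    set A := ∑ i, u i ⊗ₜ[ℝ] u i with hA
    by_cases hA0 : A = 0
    · exact ⟨0, hK.1, by simp [hA0]⟩
    -- each term is a multiple of A
    have key : ∀ i, ∃ l : ℝ, l ∈ Set.Icc (0:ℝ) 1 ∧ u i ⊗ₜ[ℝ] u i = l • A := by
      intro i
      apply hext
      · exact ⟨1, fun _ => u i, fun _ => hu i, by simp⟩
      · have : A - u i ⊗ₜ[ℝ] u i = ∑ j ∈ Finset.univ.erase i, u j ⊗ₜ[ℝ] u j := by
          rw [Finset.sum_erase_eq_sub (Finset.mem_univ i)]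
        rw [this]
        exact CP_sum u hu _
    choose l hl hlu using key
    have hsum : A = (∑ i, l i) • A := by
      conv_lhs => rw [hA]
      rw [Finset.sum_smul]
      exact Finset.sum_congr rfl fun i _ => hlu i
    have hsum1 : (∑ i, l i) = 1 := by
      by_contra hne
      have : ((∑ i, l i) - 1) • A = 0 := by
        rw [sub_smul, one_smul, ← hsum, sub_self]
      rcases smul_eq_zero.mp this with h | h
      · exact hne (by linarith [sub_eq_zero.mp (by linarith [h] : (∑ i, l i) - 1 = 0)])
      · exact hA0 h
    have : ∃ i, l i ≠ 0 := by
      by_contra hno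
      push_neg at hno
      simp [hno] at hsum1
    obtain ⟨i, hi⟩ := this
    have hipos : 0 < l i := lt_of_le_of_ne (hl i).1 (Ne.symm hi)
    set c : ℝ := (Real.sqrt (l i))⁻¹ with hc
    have hcc : c * c = (l i)⁻¹ := by
      rw [hc, ← mul_inv, Real.mul_self_sqrt hipos.le]
    refine ⟨c • u i, hK.2.2.1 c (inv_nonneg.mpr (Real.sqrt_nonneg _)) _ (hu i), ?_⟩
    rw [smul_tmul_self, hcc, hlu i, smul_smul, inv_mul_cancel₀ hipos.ne', one_smul]
  · rintro ⟨u, hu, rfl⟩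
    refine ⟨⟨1, fun _ => u, fun _ => hu, by simp⟩, ?_⟩
    rintro w ⟨n, v, hv, rfl⟩ hsub
    obtain ⟨m, t, ht, hts⟩ := hsub
    have hdec : u ⊗ₜ[ℝ] u = ∑ i, Fin.append v t i ⊗ₜ[ℝ] Fin.append v t i := by
      rw [Fin.sum_univ_add]
      simp only [Fin.append_left, Fin.append_right]
      rw [← hts]
      abel
    choose c hcspec using decomp_aux u (Fin.append v t) hdec
    have hw : (∑ i, v i ⊗ₜ[ℝ] v i) =
        (∑ j : Fin n, c (Fin.castAdd m j) * c (Fin.castAdd m j)) • (u ⊗ₜ[ℝ] u) := by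
      rw [Finset.sum_smul]
      refine Finset.sum_congr rfl fun j _ => ?_
      have := hcspec (Fin.castAdd m j)
      rw [Fin.append_left] at this
      rw [this, smul_tmul_self]
    by_cases hu0 : u ⊗ₜ[ℝ] u = 0
    · exact ⟨0, ⟨le_refl 0, zero_le_one⟩, by simp [hw, hu0]⟩
    · set L := ∑ j : Fin n, c (Fin.castAdd m j) * c (Fin.castAdd m j) with hL
      set M := ∑ j : Fin m, c (Fin.natAdd n j) * c (Fin.natAdd n j) with hM
      have hrem : (∑ k, t k ⊗ₜ[ℝ] t k) = M • (u ⊗ₜ[ℝ] u) := by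
        rw [hM, Finset.sum_smul]
        refine Finset.sum_congr rfl fun k _ => ?_
        have := hcspec (Fin.natAdd n k)
        rw [Fin.append_right] at this
        rw [this, smul_tmul_self]
      have hsum : u ⊗ₜ[ℝ] u = (L + M) • (u ⊗ₜ[ℝ] u) := by
        conv_lhs => rw [hdec, Fin.sum_univ_add]
        simp only [Fin.append_left, Fin.append_right]
        rw [hw, hrem, add_smul]
      have hLM : L + M = 1 := by
        have : ((L + M) - 1) • (u ⊗ₜ[ℝ] u) = 0 := by
          rw [sub_smul, one_smul, ← hsum, sub_self]
        rcases smul_eq_zero.mp this with h | h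
        · linarith [sub_eq_zero.mp h]
        · exact absurd h hu0
      have hL0 : 0 ≤ L := Finset.sum_nonneg fun j _ => mul_self_nonneg _
      have hM0 : 0 ≤ M := Finset.sum_nonneg fun j _ => mul_self_nonneg _
      exact ⟨L, ⟨hL0, by linarith⟩, hw⟩
end

section
/- Let X be an ordered normed vector space with closed generating cone X₊ and let CP₁ = {x⊗x : x ∈ X₊, x ≠ 0}. A linear map T : X⁽²⁾ → X⁽²⁾ satisfies T[CP₁] ⊆ CP₁ if and only if either (i) T = P₂(f) for a positive linear map f (f[X₊] ⊆ X₊) with f(x) ≠ 0 for all x ∈ X₊ \ {0}; or (ii) T(A) = φ(A)·B for some B ∈ CP₁ and linear functional φ on X⁽²⁾ with φ(x⊗x) > 0 for all x ∈ X₊ \ {0}. -/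
open TensorProduct

/-- The set `CP₁` of CP-rank-one elements of `X⁽²⁾`. -/
noncomputable def CPone {X : Type*} [AddCommGroup X] [Module ℝ X] (Xp : Set X) :
    Set (sym2Space X) :=
  {A | ∃ x ∈ Xp, x ≠ 0 ∧ (A : X ⊗[ℝ] X) = x ⊗ₜ[ℝ] x}

/-!
For `x` in the cone write `T (x ⊗ x) = h x ⊗ h x` with `h x` in the cone; `h x` is unique
because the cone is pointed. If `h x` and `h y` are linearly independent, the rank-one tensors
`T ((x + t y) ⊗ (x + t y)) = h x ⊗ h x + t S + t² h y ⊗ h y`, `t > 0`, force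
`S = ±(h x ⊗ h y + h y ⊗ h x)`, and the sign `-` would put `±(h x - t h y)` in the cone for every
`t > 0`, which a closed pointed cone forbids by connectedness of `(0, ∞)`. Hence `T` acts on
symmetric products as `h` does, for all pairs in the cone as soon as `h` takes two independent
values; then `h` is additive and positively homogeneous, so it extends from the generating cone to
a linear `f` with `T = P₂(f)`. Otherwise all values of `h` lie on one ray through `b`, and `T` maps
the span of the `x ⊗ x`, which is all of `X⁽²⁾`, into `ℝ (b ⊗ b)`.
-/

section LinearAlgebra

variable {K V : Type*} [Field K] [AddCommGroup V] [Module K V]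

theorem LinearIndependent.exists_dual_apply_eq_ite {ι : Type*} [DecidableEq ι] {v : ι → V}
    (hv : LinearIndependent K v) :
    ∃ f : ι → Module.Dual K V, ∀ i j, f i (v j) = if i = j then 1 else 0 := by
  choose f hf using fun i ↦ LinearMap.exists_extend ((Module.Basis.span hv).coord i)
  refine ⟨f, fun i j ↦ ?_⟩
  have : f i (v j) = (Module.Basis.span hv).coord i (Module.Basis.span hv j) := by
    rw [← hf i, LinearMap.comp_apply, Module.Basis.span_apply, Submodule.subtype_apply]
  rw [this, Module.Basis.coord_apply, Module.Basis.repr_self, Finsupp.single_apply]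
  exact if_congr eq_comm rfl rfl

theorem LinearMap.eq_or_eq_neg_of_forall_mul_self_eq {R M : Type*} [CommRing R] [NoZeroDivisors R]
    [AddCommGroup M] [Module R M] {f g : M →ₗ[R] R} (h : ∀ m, f m * f m = g m * g m) :
    f = g ∨ f = -g := by
  have hpm m : f m = g m ∨ f m = -g m := mul_self_eq_mul_self_iff.mp (h m)
  by_contra! hfg
  obtain ⟨m₁, hm₁⟩ := DFunLike.ne_iff.mp hfg.1
  obtain ⟨m₂, hm₂⟩ := DFunLike.ne_iff.mp hfg.2
  have h₁ : f m₁ = -g m₁ := (hpm m₁).resolve_left hm₁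
  have h₂ : f m₂ = g m₂ := (hpm m₂).resolve_right hm₂
  rcases hpm (m₁ + m₂) with h₃ | h₃ <;> simp only [map_add, h₁, h₂] at h₃
  · exact hm₁ (by rw [h₁]; linear_combination h₃)
  · exact hm₂ (by simp only [h₂, LinearMap.neg_apply]; linear_combination h₃)

theorem eq_or_eq_neg_of_forall_dual_mul_self_eq {p q : V}
    (h : ∀ γ : Module.Dual K V, γ p * γ p = γ q * γ q) : p = q ∨ p = -q := by
  rcases LinearMap.eq_or_eq_neg_of_forall_mul_self_eq
      (f := Module.Dual.eval K V p) (g := Module.Dual.eval K V q) h with hpq | hpq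
  · exact .inl (Module.eval_apply_injective K hpq)
  · exact .inr (Module.eval_apply_injective K (by rw [hpq, map_neg]))

noncomputable def tensorForm (t : V ⊗[K] V) : Module.Dual K V →ₗ[K] Module.Dual K V →ₗ[K] K :=
  (TensorProduct.mk K _ _).compr₂ ((TensorProduct.dualDistrib K V V).flip t)

@[simp] theorem tensorForm_tmul (a b : V) (γ δ : Module.Dual K V) :
    tensorForm (a ⊗ₜ b) γ δ = γ a * δ b := rfl

@[simp] theorem tensorForm_add (s t : V ⊗[K] V) (γ δ : Module.Dual K V) :
    tensorForm (s + t) γ δ = tensorForm s γ δ + tensorForm t γ δ := by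
  simp [tensorForm]

@[simp] theorem tensorForm_smul (c : K) (t : V ⊗[K] V) (γ δ : Module.Dual K V) :
    tensorForm (c • t) γ δ = c * tensorForm t γ δ := by
  simp [tensorForm]

theorem tmul_self_eq_tmul_self_iff {a b : V} : a ⊗ₜ[K] a = b ⊗ₜ b ↔ a = b ∨ a = -b := by
  refine ⟨fun h ↦ eq_or_eq_neg_of_forall_dual_mul_self_eq (K := K) fun γ ↦ ?_, ?_⟩
  · simpa using congrArg (fun t ↦ tensorForm t γ γ) h
  · rintro (rfl | rfl) <;> simp [neg_tmul, tmul_neg]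

theorem LinearIndependent.pair_left_or_of_ne_zero {a b c : V} (hab : LinearIndependent K ![a, b])
    (hc : c ≠ 0) : LinearIndependent K ![c, a] ∨ LinearIndependent K ![c, b] := by
  by_contra! h
  simp only [LinearIndependent.pair_iff' hc, not_forall, not_not] at h
  obtain ⟨⟨r, rfl⟩, ⟨s, rfl⟩⟩ := h
  have hr : r ≠ 0 := by rintro rfl; simpa using hab.ne_zero 0
  have := LinearIndependent.pair_iff.mp hab s (-r) (by module)
  exact hr (neg_eq_zero.mp this.2)

end LinearAlgebra

theorem coeffs_of_forall_pos_mul_eq_sq {a₀ a₁ a₂ b₀ b₁ b₂ c₀ c₁ c₂ : ℝ}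
    (h : ∀ t : ℝ, 0 < t →
      (a₀ + a₁ * t + a₂ * t ^ 2) * (b₀ + b₁ * t + b₂ * t ^ 2) = (c₀ + c₁ * t + c₂ * t ^ 2) ^ 2) :
    a₀ * b₁ + a₁ * b₀ = 2 * c₀ * c₁ ∧ a₀ * b₂ + a₁ * b₁ + a₂ * b₀ = 2 * c₀ * c₂ + c₁ ^ 2 ∧
      a₁ * b₂ + a₂ * b₁ = 2 * c₁ * c₂ := by
  have e1 := h 1 one_pos
  have e2 := h 2 two_pos
  have e3 := h 3 (by norm_num)
  have e4 := h 4 (by norm_num)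
  have e5 := h 5 (by norm_num)
  refine ⟨?_, ?_, ?_⟩ <;> linarith

theorem exists_eq_smul_symm_of_forall_pos_tmul_self {X : Type*} [AddCommGroup X] [Module ℝ X]
    {u v : X} {S : X ⊗[ℝ] X} (huv : LinearIndependent ℝ ![u, v])
    (hw : ∀ t : ℝ, 0 < t → ∃ w : X, w ⊗ₜ w = u ⊗ₜ u + t • S + t ^ 2 • v ⊗ₜ v) :
    ∃ ε : ℝ, ε * ε = 1 ∧ S = ε • (u ⊗ₜ v + v ⊗ₜ u) := by
  set F := tensorForm S
  have hval {t : ℝ} {w : X} (hw : w ⊗ₜ w = u ⊗ₜ u + t • S + t ^ 2 • v ⊗ₜ v)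
      (γ δ : Module.Dual ℝ X) : γ w * δ w = γ u * δ u + F γ δ * t + γ v * δ v * t ^ 2 := by
    have := congrArg (fun s ↦ tensorForm s γ δ) hw
    simp only [tensorForm_tmul, tensorForm_add, tensorForm_smul] at this
    linear_combination this
  -- `w ⊗ w` has rank one, so every `2 × 2` minor of its form vanishes
  have hdet (γ δ : Module.Dual ℝ X) (t : ℝ) (ht : 0 < t) :
      (γ u * γ u + F γ γ * t + γ v * γ v * t ^ 2) * (δ u * δ u + F δ δ * t + δ v * δ v * t ^ 2) =
        (γ u * δ u + F γ δ * t + γ v * δ v * t ^ 2) ^ 2 := by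
    obtain ⟨w, hw⟩ := hw t ht
    rw [← hval hw, ← hval hw, ← hval hw]
    ring
  -- With `α, β` dual to `u, v`, the minor at `(α, β)` gives `F α α = 0`; the minors at `(γ, α)`
  -- then give `F γ γ = 2 γ(u) F γ α` and `(F γ α) ^ 2 = γ(v) ^ 2`.
  obtain ⟨f, hf⟩ := huv.exists_dual_apply_eq_ite
  set α := f 0
  have hαu : α u = 1 := by simpa using hf 0 0
  have hαv : α v = 0 := by simpa using hf 0 1
  have hβv : f 1 v = 1 := by simpa using hf 1 1
  have hαα : F α α = 0 := by
    have := (coeffs_of_forall_pos_mul_eq_sq (hdet α (f 1))).2.2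
    simp only [hαv, hβv] at this
    linarith
  have hγα (γ : Module.Dual ℝ X) :
      F γ γ = 2 * γ u * F γ α ∧ γ v * γ v = F γ α * F γ α := by
    obtain ⟨h₁, h₂, -⟩ := coeffs_of_forall_pos_mul_eq_sq (hdet γ α)
    simp only [hαu, hαv, hαα] at h₁ h₂
    constructor <;> linarith
  obtain ⟨ε, hε, hFα⟩ : ∃ ε : ℝ, ε * ε = 1 ∧ ∀ γ, F γ α = ε * γ v := by
    rcases LinearMap.eq_or_eq_neg_of_forall_mul_self_eq (f := F.flip α)
      (g := Module.Dual.eval ℝ X v) fun γ ↦ (hγα γ).2.symm with h | h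
    · exact ⟨1, by norm_num, fun γ ↦ by simpa using LinearMap.congr_fun h γ⟩
    · exact ⟨-1, by norm_num, fun γ ↦ by simpa using LinearMap.congr_fun h γ⟩
  obtain ⟨w, hw₁⟩ := hw 1 one_pos
  have hw : w ⊗ₜ[ℝ] w = (u + ε • v) ⊗ₜ (u + ε • v) := by
    refine tmul_self_eq_tmul_self_iff.mpr <|
      eq_or_eq_neg_of_forall_dual_mul_self_eq (K := ℝ) fun γ ↦ ?_
    rw [hval hw₁, (hγα γ).1, hFα, map_add, map_smul, smul_eq_mul]
    linear_combination -(γ v * γ v) * hε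
  refine ⟨ε, hε, ?_⟩
  have hS' : S = w ⊗ₜ w - u ⊗ₜ u - v ⊗ₜ v := by rw [hw₁]; module
  rw [hS', hw]
  simp only [tmul_add, add_tmul, smul_tmul, tmul_smul]
  linear_combination (norm := module) hε • (v ⊗ₜ[ℝ] v)

namespace IsCone

variable {X : Type*} [AddCommGroup X] [Module ℝ X] {K : Set X}

theorem add_mem (hK : IsCone K) {x y : X} (hx : x ∈ K) (hy : y ∈ K) : x + y ∈ K :=
  hK.2.1 x hx y hy

theorem smul_mem (hK : IsCone K) {c : ℝ} (hc : 0 ≤ c) {x : X} (hx : x ∈ K) : c • x ∈ K :=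
  hK.2.2.1 c hc x hx

theorem eq_zero_of_neg_mem (hK : IsCone K) {x : X} (hx : x ∈ K) (hnx : -x ∈ K) : x = 0 :=
  hK.2.2.2 ⟨hx, hnx⟩

theorem eq_of_tmul_self_eq (hK : IsCone K) {a b : X} (ha : a ∈ K) (hb : b ∈ K)
    (hab : a ⊗ₜ[ℝ] a = b ⊗ₜ b) : a = b := by
  rcases tmul_self_eq_tmul_self_iff.mp hab with h | rfl
  · exact h
  · rw [hK.eq_zero_of_neg_mem hb ha, neg_zero]

theorem exists_linearMap_eqOn {Y : Type*} [AddCommGroup Y] [Module ℝ Y] (hK : IsCone K)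
    (hgen : ∀ z : X, ∃ a ∈ K, ∃ b ∈ K, z = a - b) (g : X → Y)
    (hadd : ∀ x ∈ K, ∀ y ∈ K, g (x + y) = g x + g y)
    (hsmul : ∀ c : ℝ, 0 ≤ c → ∀ x ∈ K, g (c • x) = c • g x) :
    ∃ f : X →ₗ[ℝ] Y, ∀ x ∈ K, f x = g x := by
  choose a ha b hb hab using hgen
  have hwd {x y : X} (hx : x ∈ K) (hy : y ∈ K) {z : X} (hz : z = x - y) :
      g (a z) - g (b z) = g x - g y := by
    have : a z + y = x + b z := sub_eq_sub_iff_add_eq_add.mp ((hab z).symm.trans hz)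
    rw [sub_eq_sub_iff_add_eq_add, ← hadd _ (ha z) _ hy, ← hadd _ hx _ (hb z), this]
  let f : X →ₗ[ℝ] Y :=
    { toFun z := g (a z) - g (b z)
      map_add' z w := by
        rw [hwd (hK.add_mem (ha z) (ha w)) (hK.add_mem (hb z) (hb w))
            (by rw [add_sub_add_comm, ← hab, ← hab]),
          hadd _ (ha z) _ (ha w), hadd _ (hb z) _ (hb w)]
        abel
      map_smul' c z := by
        rcases le_or_gt 0 c with hc | hc
        · rw [hwd (hK.smul_mem hc (ha z)) (hK.smul_mem hc (hb z)) (by rw [← smul_sub, ← hab]),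
            hsmul c hc _ (ha z), hsmul c hc _ (hb z), RingHom.id_apply, smul_sub]
        · rw [hwd (hK.smul_mem (neg_nonneg.mpr hc.le) (hb z))
              (hK.smul_mem (neg_nonneg.mpr hc.le) (ha z))
              (by rw [← smul_sub, ← neg_sub, smul_neg, neg_smul, neg_neg, ← hab]),
            hsmul _ (neg_nonneg.mpr hc.le) _ (ha z), hsmul _ (neg_nonneg.mpr hc.le) _ (hb z),
            RingHom.id_apply]
          module }
  have hg0 : g 0 = 0 := by simpa using hsmul 0 le_rfl 0 hK.1
  exact ⟨f, fun x hx ↦ (hwd hx hK.1 (sub_zero x).symm).trans (by rw [hg0, sub_zero])⟩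

variable [TopologicalSpace X] [IsTopologicalAddGroup X] [ContinuousSMul ℝ X]

/-- Otherwise the connected ray `t > 0` is covered by the two disjoint closed sets where
`u - t • v ∈ K` and where `t • v - u ∈ K`, both nonempty because `-u, -v ∉ K`. -/
theorem exists_sub_smul_notMem (hK : IsCone K) (hKc : IsClosed K) {u v : X} (hu : u ∈ K)
    (hv : v ∈ K) (huv : LinearIndependent ℝ ![u, v]) :
    ∃ t : ℝ, 0 < t ∧ u - t • v ∉ K ∧ -(u - t • v) ∉ K := by
  by_contra! hcover
  have mem_of_forall_pos {g : ℝ → X} (hg : Continuous g) (hgK : ∀ t ∈ Set.Ioi 0, g t ∈ K) :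
      g 0 ∈ K :=
    hKc.mem_of_tendsto ((hg.tendsto 0).mono_left nhdsWithin_le_nhds)
      (eventually_nhdsWithin_of_forall hgK)
  have hu0 : u ≠ 0 := by simpa using huv.ne_zero 0
  have hv0 : v ≠ 0 := by simpa using huv.ne_zero 1
  set C := (fun t : ℝ ↦ u - t • v) ⁻¹' K
  set D := (fun t : ℝ ↦ -(u - t • v)) ⁻¹' K
  have hC : (Set.Ioi 0 ∩ C).Nonempty := by
    by_contra hC
    have hD : ∀ t ∈ Set.Ioi (0 : ℝ), -(u - t • v) ∈ K := fun t ht ↦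
      hcover t ht fun hCt ↦ hC ⟨t, ht, hCt⟩
    exact hu0 (hK.eq_zero_of_neg_mem hu (by simpa using mem_of_forall_pos (by fun_prop) hD))
  have hD : (Set.Ioi 0 ∩ D).Nonempty := by
    by_contra hD
    have hC : ∀ t ∈ Set.Ioi (0 : ℝ), t • u - v ∈ K := fun t (ht : 0 < t) ↦ by
      have hCt : u - t⁻¹ • v ∈ K := by
        by_contra hCt
        exact hD ⟨t⁻¹, inv_pos.mpr ht, hcover _ (inv_pos.mpr ht) hCt⟩
      have := hK.smul_mem ht.le hCt
      rwa [smul_sub, smul_smul, mul_inv_cancel₀ ht.ne', one_smul] at this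
    exact hv0 (hK.eq_zero_of_neg_mem hv (by simpa using mem_of_forall_pos (by fun_prop) hC))
  obtain ⟨t, -, htC, htD⟩ := isPreconnected_closed_iff.mp isPreconnected_Ioi C D
    (hKc.preimage (by fun_prop)) (hKc.preimage (by fun_prop))
    (fun t ht ↦ (em (t ∈ C)).imp_right (hcover t ht)) hC hD
  have := LinearIndependent.pair_iff.mp huv 1 (-t)
    (by rw [one_smul, neg_smul, ← sub_eq_add_neg]; exact hK.eq_zero_of_neg_mem htC htD)
  exact one_ne_zero this.1

theorem eq_tmul_add_tmul_of_forall_pos (hK : IsCone K) (hKc : IsClosed K) {u v : X}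
    (hu : u ∈ K) (hv : v ∈ K) (huv : LinearIndependent ℝ ![u, v]) {S : X ⊗[ℝ] X}
    (hw : ∀ t : ℝ, 0 < t → ∃ w ∈ K, w ⊗ₜ w = u ⊗ₜ u + t • S + t ^ 2 • v ⊗ₜ v) :
    S = u ⊗ₜ v + v ⊗ₜ u := by
  obtain ⟨ε, hε, rfl⟩ := exists_eq_smul_symm_of_forall_pos_tmul_self huv
    fun t ht ↦ (hw t ht).imp fun _ ↦ And.right
  rcases mul_self_eq_one_iff.mp hε with rfl | rfl
  · exact one_smul _ _
  obtain ⟨t, ht, htK, htK'⟩ := hK.exists_sub_smul_notMem hKc hu hv huv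
  obtain ⟨w, hwK, hw⟩ := hw t ht
  have : w ⊗ₜ[ℝ] w = (u - t • v) ⊗ₜ (u - t • v) := by
    rw [hw]
    simp only [tmul_sub, sub_tmul, smul_tmul, tmul_smul]
    module
  rcases tmul_self_eq_tmul_self_iff.mp this with rfl | rfl
  exacts [(htK hwK).elim, (htK' hwK).elim]

end IsCone

section Sym2

variable {X : Type*} [AddCommGroup X] [Module ℝ X]

noncomputable def symmetrize : X ⊗[ℝ] X →ₗ[ℝ] sym2Space X :=
  LinearMap.codRestrict _ (LinearMap.id + (TensorProduct.comm ℝ X X).toLinearMap) fun t ↦ by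
    simp [sym2Space, LinearMap.mem_eqLocus, add_comm]

@[simp] theorem coe_symmetrize (t : X ⊗[ℝ] X) :
    (symmetrize t : X ⊗[ℝ] X) = t + TensorProduct.comm ℝ X X t := rfl

@[simp] theorem coe_sq2 (x : X) : (sq2 x : X ⊗[ℝ] X) = x ⊗ₜ x := rfl

@[simp] theorem sq2_zero : sq2 (0 : X) = 0 := by ext; simp

theorem sq2_smul (c : ℝ) (x : X) : sq2 (c • x) = c ^ 2 • sq2 x := by
  ext; simp [smul_tmul, smul_smul, sq]

theorem sq2_add (x y : X) : sq2 (x + y) = sq2 x + sq2 y + symmetrize (x ⊗ₜ y) := by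
  ext
  simp only [coe_sq2, tmul_add, add_tmul, Submodule.coe_add, coe_symmetrize, comm_tmul]
  abel

theorem sq2_sub (x y : X) : sq2 (x - y) = sq2 x + sq2 y - symmetrize (x ⊗ₜ y) := by
  ext
  simp only [coe_sq2, tmul_sub, sub_tmul, AddSubgroupClass.coe_sub, Submodule.coe_add,
    coe_symmetrize, comm_tmul]
  abel

theorem span_range_sq2 : Submodule.span ℝ (Set.range (sq2 (X := X))) = ⊤ := by
  refine eq_top_iff.mpr fun A _ ↦ ?_
  have hsymm (t : X ⊗[ℝ] X) : symmetrize t ∈ Submodule.span ℝ (Set.range sq2) := by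
    induction t using TensorProduct.induction_on with
    | zero => simp
    | tmul x y =>
      rw [show symmetrize (x ⊗ₜ y) = sq2 (x + y) - sq2 x - sq2 y by rw [sq2_add]; abel]
      exact sub_mem (sub_mem (Submodule.subset_span ⟨_, rfl⟩) (Submodule.subset_span ⟨_, rfl⟩))
        (Submodule.subset_span ⟨_, rfl⟩)
    | add s t hs ht => rw [map_add]; exact add_mem hs ht
  have hA : A = (2 : ℝ)⁻¹ • symmetrize A := by
    ext
    rw [Submodule.coe_smul, coe_symmetrize, show TensorProduct.comm ℝ X X A = A from A.2]
    module
  rw [hA]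
  exact Submodule.smul_mem _ _ (hsymm A)

theorem IsCone.span_image_sq2 {K : Set X} (hK : IsCone K)
    (hgen : ∀ z : X, ∃ a ∈ K, ∃ b ∈ K, z = a - b) : Submodule.span ℝ (sq2 '' K) = ⊤ := by
  rw [eq_top_iff, ← span_range_sq2, Submodule.span_le]
  rintro _ ⟨z, rfl⟩
  obtain ⟨a, ha, b, hb, rfl⟩ := hgen z
  have : sq2 (a - b) = (2 : ℝ) • sq2 a + (2 : ℝ) • sq2 b - sq2 (a + b) := by
    rw [sq2_sub, sq2_add]; module
  rw [SetLike.mem_coe, this]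
  have mem {x : X} (hx : x ∈ K) : sq2 x ∈ Submodule.span ℝ (sq2 '' K) :=
    Submodule.subset_span (Set.mem_image_of_mem sq2 hx)
  exact sub_mem (Submodule.add_mem _ (Submodule.smul_mem _ _ (mem ha))
    (Submodule.smul_mem _ _ (mem hb))) (mem (hK.add_mem ha hb))

theorem IsCone.sq2_injOn {K : Set X} (hK : IsCone K) : Set.InjOn sq2 K :=
  fun _ ha _ hb hab ↦ hK.eq_of_tmul_self_eq ha hb (congrArg Subtype.val hab)

theorem mem_CPone_iff {K : Set X} {A : sym2Space X} :
    A ∈ CPone K ↔ ∃ x ∈ K, x ≠ 0 ∧ A = sq2 x := by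
  simp only [CPone, Set.mem_ofPred_eq, Subtype.ext_iff, coe_sq2]

end Sym2

section Lift

variable {X : Type*} [AddCommGroup X] [Module ℝ X]

structure IsSq2LiftOn (T : sym2Space X →ₗ[ℝ] sym2Space X) (K : Set X) (h : X → X) : Prop where
  mapsTo : Set.MapsTo h K K
  ne_zero : ∀ x ∈ K, x ≠ 0 → h x ≠ 0
  sq2_eq : ∀ x ∈ K, T (sq2 x) = sq2 (h x)

theorem exists_isSq2LiftOn {T : sym2Space X →ₗ[ℝ] sym2Space X} {K : Set X} (hK : IsCone K)
    (hT : ∀ A ∈ CPone K, T A ∈ CPone K) : ∃ h, IsSq2LiftOn T K h := by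
  have (x : X) (hx : x ∈ K) : ∃ y ∈ K, (x ≠ 0 → y ≠ 0) ∧ T (sq2 x) = sq2 y := by
    by_cases hx0 : x = 0
    · exact ⟨0, hK.1, fun h ↦ (h hx0).elim, by simp [hx0]⟩
    · obtain ⟨y, hy, hy0, hTy⟩ := mem_CPone_iff.mp (hT _ (mem_CPone_iff.mpr ⟨x, hx, hx0, rfl⟩))
      exact ⟨y, hy, fun _ ↦ hy0, hTy⟩
  choose! h hmem hne heq using this
  exact ⟨h, hmem, hne, heq⟩

namespace IsSq2LiftOn

variable {T : sym2Space X →ₗ[ℝ] sym2Space X} {K : Set X} {h : X → X}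

theorem map_zero (hh : IsSq2LiftOn T K h) (hK : IsCone K) : h 0 = 0 :=
  hK.sq2_injOn (hh.mapsTo hK.1) hK.1 (by rw [← hh.sq2_eq 0 hK.1, sq2_zero, T.map_zero])

theorem map_smul_of_nonneg (hh : IsSq2LiftOn T K h) (hK : IsCone K) {c : ℝ} (hc : 0 ≤ c)
    {x : X} (hx : x ∈ K) : h (c • x) = c • h x :=
  hK.sq2_injOn (hh.mapsTo (hK.smul_mem hc hx)) (hK.smul_mem hc (hh.mapsTo hx)) <| by
    rw [← hh.sq2_eq _ (hK.smul_mem hc hx), sq2_smul, map_smul, hh.sq2_eq x hx, sq2_smul]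

theorem map_add_of_symmetrize_eq (hh : IsSq2LiftOn T K h) (hK : IsCone K) {x y : X}
    (hx : x ∈ K) (hy : y ∈ K) (hxy : T (symmetrize (x ⊗ₜ y)) = symmetrize (h x ⊗ₜ h y)) :
    h (x + y) = h x + h y :=
  hK.sq2_injOn (hh.mapsTo (hK.add_mem hx hy)) (hK.add_mem (hh.mapsTo hx) (hh.mapsTo hy)) <| by
    rw [← hh.sq2_eq _ (hK.add_mem hx hy), sq2_add, map_add, map_add, hh.sq2_eq x hx,
      hh.sq2_eq y hy, hxy, sq2_add]

section Topological

variable [TopologicalSpace X] [IsTopologicalAddGroup X] [ContinuousSMul ℝ X]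

theorem symmetrize_eq_of_linearIndependent (hh : IsSq2LiftOn T K h) (hK : IsCone K)
    (hKc : IsClosed K) {x y : X} (hx : x ∈ K) (hy : y ∈ K)
    (hxy : LinearIndependent ℝ ![h x, h y]) :
    T (symmetrize (x ⊗ₜ y)) = symmetrize (h x ⊗ₜ h y) := by
  ext1
  rw [coe_symmetrize, comm_tmul]
  refine hK.eq_tmul_add_tmul_of_forall_pos hKc (hh.mapsTo hx) (hh.mapsTo hy) hxy fun t ht ↦ ?_
  have hxty : x + t • y ∈ K := hK.add_mem hx (hK.smul_mem ht.le hy)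
  refine ⟨h (x + t • y), hh.mapsTo hxty, ?_⟩
  have := congrArg Subtype.val (hh.sq2_eq _ hxty)
  rw [sq2_add, sq2_smul, tmul_smul, map_smul, map_add, map_add, map_smul, map_smul,
    hh.sq2_eq x hx, hh.sq2_eq y hy] at this
  simpa [add_right_comm] using this.symm

/-- A third element `z` with `h z` off the line of `h x` reduces a dependent pair `(x, y)` to
the independent pairs `(x, z)`, `(y, z)` and `(x, y + z)`. -/
theorem symmetrize_eq (hh : IsSq2LiftOn T K h) (hK : IsCone K) (hKc : IsClosed K)
    (hpq : ∃ p ∈ K, ∃ q ∈ K, LinearIndependent ℝ ![h p, h q]) {x y : X} (hx : x ∈ K)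
    (hy : y ∈ K) : T (symmetrize (x ⊗ₜ y)) = symmetrize (h x ⊗ₜ h y) := by
  by_cases hx0 : x = 0
  · simp [hx0, hh.map_zero hK]
  by_cases hy0 : y = 0
  · simp [hy0, hh.map_zero hK]
  by_cases hxy : LinearIndependent ℝ ![h x, h y]
  · exact hh.symmetrize_eq_of_linearIndependent hK hKc hx hy hxy
  obtain ⟨c, hc⟩ : ∃ c : ℝ, c • h x = h y := by
    simpa [LinearIndependent.pair_iff' (hh.ne_zero x hx hx0)] using hxy
  have hc0 : c ≠ 0 := by
    rintro rfl
    exact hh.ne_zero y hy hy0 (by rw [← hc, zero_smul])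
  obtain ⟨z, hz, hxz⟩ : ∃ z ∈ K, LinearIndependent ℝ ![h x, h z] := by
    obtain ⟨p, hp, q, hq, hpq⟩ := hpq
    exact (hpq.pair_left_or_of_ne_zero (hh.ne_zero x hx hx0)).elim (⟨p, hp, ·⟩) (⟨q, hq, ·⟩)
  have hyz : LinearIndependent ℝ ![h y, h z] := by
    simpa [hc] using (LinearIndependent.pair_smul_smul_iff hc0.isUnit isUnit_one).mpr hxz
  have hyz' : h (y + z) = h y + h z :=
    hh.map_add_of_symmetrize_eq hK hy hz (hh.symmetrize_eq_of_linearIndependent hK hKc hy hz hyz)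
  have hxyz : LinearIndependent ℝ ![h x, h (y + z)] := by
    rwa [hyz', ← hc, LinearIndependent.pair_add_smul_right_iff]
  have := hh.symmetrize_eq_of_linearIndependent hK hKc hx (hK.add_mem hy hz) hxyz
  rw [tmul_add, map_add, map_add, hh.symmetrize_eq_of_linearIndependent hK hKc hx hz hxz, hyz',
    tmul_add, map_add] at this
  exact add_right_cancel this

end Topological

theorem exists_linearMap (hh : IsSq2LiftOn T K h) (hK : IsCone K)
    (hgen : ∀ z : X, ∃ a ∈ K, ∃ b ∈ K, z = a - b)
    (hsymm : ∀ x ∈ K, ∀ y ∈ K, T (symmetrize (x ⊗ₜ y)) = symmetrize (h x ⊗ₜ h y)) :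
    ∃ f : X →ₗ[ℝ] X, (∀ x ∈ K, f x ∈ K) ∧ (∀ x ∈ K, x ≠ 0 → f x ≠ 0) ∧
      ∀ x, T (sq2 x) = sq2 (f x) := by
  obtain ⟨f, hf⟩ := hK.exists_linearMap_eqOn hgen h
    (fun x hx y hy ↦ hh.map_add_of_symmetrize_eq hK hx hy (hsymm x hx y hy))
    (fun c hc x hx ↦ hh.map_smul_of_nonneg hK hc hx)
  refine ⟨f, fun x hx ↦ hf x hx ▸ hh.mapsTo hx, fun x hx hx0 ↦ hf x hx ▸ hh.ne_zero x hx hx0,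
    fun z ↦ ?_⟩
  obtain ⟨a, ha, b, hb, rfl⟩ := hgen z
  rw [sq2_sub, map_sub, map_add, hh.sq2_eq a ha, hh.sq2_eq b hb, hsymm a ha b hb, map_sub,
    hf a ha, hf b hb, sq2_sub]

theorem exists_eq_smul (hh : IsSq2LiftOn T K h) (hK : IsCone K)
    (hgen : ∀ z : X, ∃ a ∈ K, ∃ b ∈ K, z = a - b) {x₀ : X} (hx₀ : x₀ ∈ K) (hx₀0 : x₀ ≠ 0)
    (hdep : ∀ x ∈ K, ¬LinearIndependent ℝ ![h x₀, h x]) :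
    ∃ B ∈ CPone K, ∃ φ : sym2Space X →ₗ[ℝ] ℝ,
      (∀ x ∈ K, x ≠ 0 → 0 < φ (sq2 x)) ∧ ∀ A, T A = φ A • B := by
  have hb0 : h x₀ ≠ 0 := hh.ne_zero x₀ hx₀ hx₀0
  have hcoef (x : X) (hx : x ∈ K) : ∃ c : ℝ, T (sq2 x) = c ^ 2 • sq2 (h x₀) ∧ (x ≠ 0 → c ≠ 0) := by
    obtain ⟨c, hc⟩ : ∃ c : ℝ, c • h x₀ = h x := by
      simpa [LinearIndependent.pair_iff' hb0] using hdep x hx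
    refine ⟨c, by rw [hh.sq2_eq x hx, ← hc, sq2_smul], fun hx0 ↦ ?_⟩
    rintro rfl
    exact hh.ne_zero x hx hx0 (by rw [← hc, zero_smul])
  have hrange (A : sym2Space X) : T A ∈ Submodule.span ℝ {sq2 (h x₀)} := by
    have : Submodule.span ℝ (sq2 '' K) ≤ (Submodule.span ℝ {sq2 (h x₀)}).comap T := by
      refine Submodule.span_le.mpr ?_
      rintro _ ⟨x, hx, rfl⟩
      obtain ⟨c, hc, -⟩ := hcoef x hx
      rw [SetLike.mem_coe, Submodule.mem_comap, hc]
      exact Submodule.smul_mem _ _ (Submodule.mem_span_singleton_self _)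
    exact this (hK.span_image_sq2 hgen ▸ Submodule.mem_top)
  have hB0 : sq2 (h x₀) ≠ 0 := fun h0 ↦
    hb0 (hK.sq2_injOn (hh.mapsTo hx₀) hK.1 (h0.trans sq2_zero.symm))
  obtain ⟨ψ, hψ⟩ := Module.Projective.exists_dual_eq_one ℝ hB0
  refine ⟨sq2 (h x₀), mem_CPone_iff.mpr ⟨h x₀, hh.mapsTo hx₀, hb0, rfl⟩, ψ ∘ₗ T,
    fun x hx hx0 ↦ ?_, fun A ↦ ?_⟩
  · obtain ⟨c, hc, hc0⟩ := hcoef x hx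
    rw [LinearMap.comp_apply, hc, map_smul, hψ, smul_eq_mul, mul_one]
    exact sq_pos_of_ne_zero (hc0 hx0)
  · obtain ⟨r, hr⟩ := Submodule.mem_span_singleton.mp (hrange A)
    rw [LinearMap.comp_apply, ← hr, map_smul, hψ, smul_eq_mul, mul_one]

end IsSq2LiftOn

end Lift

theorem stmt10 {X : Type*} [NormedAddCommGroup X] [NormedSpace ℝ X]
    (Xp : Set X) (hK : IsCone Xp) (hclosed : IsClosed Xp)
    (hgen : ∀ z : X, ∃ a ∈ Xp, ∃ b ∈ Xp, z = a - b)
    (T : sym2Space X →ₗ[ℝ] sym2Space X) :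
    (∀ A ∈ CPone Xp, T A ∈ CPone Xp) ↔
      (∃ f : X →ₗ[ℝ] X, (∀ x ∈ Xp, f x ∈ Xp) ∧ (∀ x ∈ Xp, x ≠ 0 → f x ≠ 0) ∧
          ∀ x : X, ((T (sq2 x) : sym2Space X) : X ⊗[ℝ] X) = f x ⊗ₜ[ℝ] f x) ∨
      (∃ B ∈ CPone Xp, ∃ φ : sym2Space X →ₗ[ℝ] ℝ,
          (∀ x ∈ Xp, x ≠ 0 → 0 < φ (sq2 x)) ∧
          ∀ A : sym2Space X, T A = φ A • B) := by
  constructor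
  · intro hT
    obtain ⟨h, hh⟩ := exists_isSq2LiftOn hK hT
    by_cases hsymm : ∀ x ∈ Xp, ∀ y ∈ Xp, T (symmetrize (x ⊗ₜ y)) = symmetrize (h x ⊗ₜ h y)
    · obtain ⟨f, hf₁, hf₂, hf₃⟩ := hh.exists_linearMap hK hgen hsymm
      exact .inl ⟨f, hf₁, hf₂, fun x ↦ congrArg Subtype.val (hf₃ x)⟩
    · push Not at hsymm
      obtain ⟨x₀, hx₀, y₀, hy₀, hne⟩ := hsymm
      have hx₀0 : x₀ ≠ 0 := by
        rintro rfl
        simp [hh.map_zero hK] at hne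
      exact .inr <| hh.exists_eq_smul hK hgen hx₀ hx₀0 fun x hx hind ↦
        hne (hh.symmetrize_eq hK hclosed ⟨x₀, hx₀, x, hx, hind⟩ hx₀ hy₀)
  · rintro (⟨f, hf₁, hf₂, hf₃⟩ | ⟨B, hB, φ, hφ, hTφ⟩) A hA <;>
      obtain ⟨x, hx, hx0, rfl⟩ := mem_CPone_iff.mp hA
    · exact mem_CPone_iff.mpr ⟨f x, hf₁ x hx, hf₂ x hx hx0, Subtype.ext (hf₃ x)⟩
    · obtain ⟨b, hb, hb0, rfl⟩ := mem_CPone_iff.mp hB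
      refine mem_CPone_iff.mpr ⟨√(φ (sq2 x)) • b, hK.smul_mem (Real.sqrt_nonneg _) hb,
        smul_ne_zero (Real.sqrt_ne_zero'.mpr (hφ x hx hx0)) hb0, ?_⟩
      rw [hTφ, sq2_smul, Real.sq_sqrt (hφ x hx hx0).le]
end

section
/- Let T : Sⁿ → Sⁿ be defined by T(A) = tr(A)·eeᵀ, where e ∈ ℝⁿ is the all-ones vector. Then T is rank-one non-increasing (rank(A) = 1 implies rank(T(A)) ≤ 1), its Moore–Penrose inverse is T†(A) = (1/n³)(eᵀAe)·I, and T† is not rank-one non-increasing (for n ≥ 2). -/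
open Matrix

/-- The space `Sⁿ` of real symmetric `n × n` matrices. -/
def symMat (n : ℕ) : Submodule ℝ (Matrix (Fin n) (Fin n) ℝ) where
  carrier := {A | A.IsSymm}
  add_mem' := fun ha hb => ha.add hb
  zero_mem' := by simp [Matrix.IsSymm]
  smul_mem' := fun c A hA => by
    simp only [Set.mem_setOf_eq, Matrix.IsSymm, Matrix.transpose_smul] at *
    rw [hA]

/-!
Both maps have one-dimensional range: `T A = tr A • J` with `J = eeᵀ`, and
`T† A = (eᵀAe / n³) • I`. Since `eᵀJe = n²`, `tr I = n` and
`tr (J B) = tr (B J) = eᵀBe`, each of the four Penrose equations collapses to an identity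
between scalars. The rank-one matrix `J` is sent by `T†` to `I / n`, of rank `n ≥ 2`.
-/

namespace Matrix

variable {ι R : Type*} [Fintype ι]

theorem one_le_rank_of_ne_zero {m : Type*} [DecidableEq ι] [Field R] {A : Matrix m ι R}
    (h : A ≠ 0) :
    1 ≤ A.rank := by
  rw [Nat.one_le_iff_ne_zero, rank, Ne, Submodule.finrank_eq_zero, LinearMap.range_eq_bot,
    ← toLin'_apply', LinearEquiv.map_eq_zero_iff]
  exact h

theorem rank_vecMulVec_one_one [DecidableEq ι] [Nonempty ι] [Field R] :
    (vecMulVec (1 : ι → R) (1 : ι → R)).rank = 1 := by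
  refine le_antisymm (rank_vecMulVec_le (1 : ι → R) 1) (one_le_rank_of_ne_zero fun h => ?_)
  inhabit ι
  simpa using congrFun₂ h default default

theorem rank_smul_one [DecidableEq ι] [Field R] {c : R} (hc : c ≠ 0) :
    (c • (1 : Matrix ι ι R)).rank = Fintype.card ι :=
  (rank_smul_of_mem_nonZeroDivisors 1 (mem_nonZeroDivisors_of_ne_zero hc)).trans rank_one

variable [CommSemiring R]

theorem trace_vecMulVec_one_one_mul (M : Matrix ι ι R) :
    trace (vecMulVec (1 : ι → R) 1 * M) = 1 ⬝ᵥ M *ᵥ 1 := by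
  rw [vecMulVec_mul, trace_vecMulVec, dotProduct_comm, dotProduct_mulVec]

theorem trace_mul_vecMulVec_one_one (M : Matrix ι ι R) :
    trace (M * vecMulVec 1 (1 : ι → R)) = 1 ⬝ᵥ M *ᵥ 1 := by
  rw [trace_mul_comm M, trace_vecMulVec_one_one_mul]

theorem one_dotProduct_vecMulVec_one_one_mulVec_one :
    1 ⬝ᵥ vecMulVec (1 : ι → R) (1 : ι → R) *ᵥ 1 = (Fintype.card ι : R) ^ 2 := by
  rw [← trace_vecMulVec_one_one_mul, vecMulVec_mul_vecMulVec, trace_vecMulVec, dotProduct_smul,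
    one_dotProduct_one, smul_eq_mul, sq]

end Matrix

section

variable {n : ℕ} {T Td : symMat n →ₗ[ℝ] symMat n}
  (hT : ∀ A : symMat n, (T A : Matrix (Fin n) (Fin n) ℝ)
    = trace (A : Matrix (Fin n) (Fin n) ℝ) • vecMulVec 1 (1 : Fin n → ℝ))
  (hTd : ∀ A : symMat n, (Td A : Matrix (Fin n) (Fin n) ℝ)
    = (1 / (n : ℝ) ^ 3 * (1 ⬝ᵥ (A : Matrix (Fin n) (Fin n) ℝ) *ᵥ 1)) • 1)

include hT in
theorem rank_T_le_one (A : symMat n) : (T A : Matrix (Fin n) (Fin n) ℝ).rank ≤ 1 := by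
  rw [hT, ← smul_vecMulVec]
  exact rank_vecMulVec_le _ _

include hT in
theorem one_dotProduct_T_mulVec_one (A : symMat n) :
    1 ⬝ᵥ (T A : Matrix (Fin n) (Fin n) ℝ) *ᵥ 1
      = trace (A : Matrix (Fin n) (Fin n) ℝ) * n ^ 2 := by
  rw [hT, smul_mulVec, dotProduct_smul, one_dotProduct_vecMulVec_one_one_mulVec_one,
    Fintype.card_fin, smul_eq_mul]

include hTd in
theorem trace_Td (A : symMat n) :
    trace (Td A : Matrix (Fin n) (Fin n) ℝ)
      = 1 / (n : ℝ) ^ 3 * (1 ⬝ᵥ (A : Matrix (Fin n) (Fin n) ℝ) *ᵥ 1) * n := by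
  rw [hTd, trace_smul, trace_one, Fintype.card_fin, smul_eq_mul]

include hT hTd in
theorem T_comp_Td_comp_T (hn : (n : ℝ) ≠ 0) : T ∘ₗ Td ∘ₗ T = T := by
  refine LinearMap.ext fun A => Subtype.ext ?_
  rw [LinearMap.comp_apply, LinearMap.comp_apply, hT (Td (T A)), trace_Td hTd,
    one_dotProduct_T_mulVec_one hT, hT A]
  congr 1
  field_simp

include hT hTd in
theorem Td_comp_T_comp_Td (hn : (n : ℝ) ≠ 0) : Td ∘ₗ T ∘ₗ Td = Td := by
  refine LinearMap.ext fun A => Subtype.ext ?_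
  rw [LinearMap.comp_apply, LinearMap.comp_apply, hTd (T (Td A)),
    one_dotProduct_T_mulVec_one hT, trace_Td hTd, hTd A]
  congr 1
  field_simp

include hT hTd in
theorem trace_T_Td_mul_comm (A B : symMat n) :
    trace ((T (Td A) : Matrix (Fin n) (Fin n) ℝ) * (B : Matrix (Fin n) (Fin n) ℝ))
      = trace ((A : Matrix (Fin n) (Fin n) ℝ) * (T (Td B) : Matrix (Fin n) (Fin n) ℝ)) := by
  rw [hT (Td A), hT (Td B), Matrix.smul_mul, Matrix.mul_smul, trace_smul, trace_smul,
    trace_vecMulVec_one_one_mul, trace_mul_vecMulVec_one_one, trace_Td hTd, trace_Td hTd,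
    smul_eq_mul, smul_eq_mul]
  ring

include hT hTd in
theorem trace_Td_T_mul_comm (A B : symMat n) :
    trace ((Td (T A) : Matrix (Fin n) (Fin n) ℝ) * (B : Matrix (Fin n) (Fin n) ℝ))
      = trace ((A : Matrix (Fin n) (Fin n) ℝ) * (Td (T B) : Matrix (Fin n) (Fin n) ℝ)) := by
  rw [hTd (T A), hTd (T B), one_dotProduct_T_mulVec_one hT, one_dotProduct_T_mulVec_one hT,
    Matrix.smul_mul, Matrix.mul_smul, Matrix.one_mul, Matrix.mul_one, trace_smul, trace_smul,
    smul_eq_mul, smul_eq_mul]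
  ring

include hTd in
theorem exists_rank_eq_one_one_lt_rank_Td (hn : 2 ≤ n) :
    ∃ A : symMat n, (A : Matrix (Fin n) (Fin n) ℝ).rank = 1 ∧
      1 < (Td A : Matrix (Fin n) (Fin n) ℝ).rank := by
  have : NeZero n := ⟨by omega⟩
  refine ⟨⟨vecMulVec 1 1, transpose_vecMulVec 1 1⟩, rank_vecMulVec_one_one, ?_⟩
  rw [hTd, one_dotProduct_vecMulVec_one_one_mulVec_one, rank_smul_one (by positivity),
    Fintype.card_fin]
  omega

end

theorem stmt12 {n : ℕ} (hn : 2 ≤ n) (T Td : symMat n →ₗ[ℝ] symMat n)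
    (hT : ∀ A : symMat n, ((T A : symMat n) : Matrix (Fin n) (Fin n) ℝ)
      = Matrix.trace (A : Matrix (Fin n) (Fin n) ℝ)
          • Matrix.vecMulVec (fun _ => (1:ℝ)) (fun _ => (1:ℝ)))
    (hTd : ∀ A : symMat n, ((Td A : symMat n) : Matrix (Fin n) (Fin n) ℝ)
      = ((1 / (n:ℝ)^3) *
          ((fun _ => (1:ℝ)) ⬝ᵥ (A : Matrix (Fin n) (Fin n) ℝ).mulVec (fun _ => (1:ℝ))))
        • (1 : Matrix (Fin n) (Fin n) ℝ)) :
    (∀ A : symMat n, (A : Matrix (Fin n) (Fin n) ℝ).rank = 1 →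
        ((T A : symMat n) : Matrix (Fin n) (Fin n) ℝ).rank ≤ 1) ∧
    T ∘ₗ Td ∘ₗ T = T ∧
    Td ∘ₗ T ∘ₗ Td = Td ∧
    (∀ A B : symMat n,
      Matrix.trace (((T (Td A) : symMat n) : Matrix (Fin n) (Fin n) ℝ) * (B : Matrix (Fin n) (Fin n) ℝ))
        = Matrix.trace ((A : Matrix (Fin n) (Fin n) ℝ) * ((T (Td B) : symMat n) : Matrix (Fin n) (Fin n) ℝ))) ∧
    (∀ A B : symMat n,
      Matrix.trace (((Td (T A) : symMat n) : Matrix (Fin n) (Fin n) ℝ) * (B : Matrix (Fin n) (Fin n) ℝ))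
        = Matrix.trace ((A : Matrix (Fin n) (Fin n) ℝ) * ((Td (T B) : symMat n) : Matrix (Fin n) (Fin n) ℝ))) ∧
    ¬ (∀ A : symMat n, (A : Matrix (Fin n) (Fin n) ℝ).rank = 1 →
        ((Td A : symMat n) : Matrix (Fin n) (Fin n) ℝ).rank ≤ 1) := by
  obtain ⟨A, hA, hTdA⟩ := exists_rank_eq_one_one_lt_rank_Td hTd hn
  have hn0 : (n : ℝ) ≠ 0 := Nat.cast_ne_zero.mpr (by omega)
  exact ⟨fun A _ => rank_T_le_one hT A, T_comp_Td_comp_T hT hTd hn0,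
    Td_comp_T_comp_Td hT hTd hn0, trace_T_Td_mul_comm hT hTd, trace_Td_T_mul_comm hT hTd,
    fun h => (h A hA).not_gt hTdA⟩
end
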